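/- arXiv:2211.12136 — 4 statements merged into one kernel-verified Lean document; each statement's English description precedes it below -/
import Mathlib

section
/- A temporal graph G = (V, E, α, β) is zero-acyclic if and only if there exists a half-extend-respecting ordering of its temporal edges, i.e., a linear order on E such that whenever edge f half-extends edge e, e precedes f in the order. -/
/-!
Half-extension is an acyclic relation exactly when it extends to a strict total order
(Szpilrajn), so it suffices to see that zero-cycles are the closed walks of half-extensions.
A zero-cycle is one, since its joints have zero travel and waiting time. Conversely, since
`λ, α ≥ 0`, departure times never decrease along half-extensions, so along a closed walk they
are all equal; a half-extension between edges with equal departure times has `λ = 0` and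
`α = 0` at the joint, which makes the walk a zero-cycle.
-/

/-- Edge `f` half-extends edge `e`: the tail of `f` equals the head of `e`
and `arr(e) + α_{head e} ≤ dep(f)`. -/
def HalfExtends {V ε : Type*} (tl hd : ε → V) (dep lam : ε → ℝ) (α : V → ℝ)
    (e f : ε) : Prop :=
  tl f = hd e ∧ dep e + lam e + α (hd e) ≤ dep f

/-- `q :: rest` is a zero-cycle: a nonempty cyclic walk all of whose edges have the same
departure time and zero travel time, and whose tails have zero minimum waiting time. -/
def IsZeroCycle {V ε : Type*} (tl hd : ε → V) (dep lam : ε → ℝ) (α : V → ℝ)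
    (q : ε) (rest : List ε) : Prop :=
  (∀ e ∈ q :: rest, lam e = 0 ∧ α (tl e) = 0 ∧ dep e = dep q) ∧
  List.Chain' (fun e f => hd e = tl f) (q :: rest) ∧
  hd ((q :: rest).getLast (by simp)) = tl q

open List Relation

namespace List

variable {α : Type*} {R : α → α → Prop}

theorem IsChain.exists_rel_of_mem_tail :
    ∀ {l : List α} {x : α}, IsChain R l → x ∈ l.tail → ∃ y ∈ l, R y x
  | a :: b :: l, x, h, hx => by
    obtain ⟨hab, h⟩ := isChain_cons_cons.1 h
    rcases mem_cons.1 hx with rfl | hx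
    · exact ⟨a, mem_cons_self, hab⟩
    · obtain ⟨y, hy, hyx⟩ := h.exists_rel_of_mem_tail hx
      exact ⟨y, mem_cons_of_mem _ hy, hyx⟩

theorem IsChain.exists_rel_of_mem_dropLast {l : List α} {x : α} (h : IsChain R l)
    (hx : x ∈ l.dropLast) : ∃ y ∈ l, R x y := by
  have h' : IsChain (flip R) l.reverse := isChain_reverse.2 (by simpa [flip] using h)
  simpa [flip] using h'.exists_rel_of_mem_tail (by rwa [tail_reverse, mem_reverse])

end List

namespace Relation

variable {α : Type*} {R : α → α → Prop}

theorem transGen_iff_exists_isChain {a b : α} :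
    TransGen R a b ↔ ∃ l, IsChain R (a :: l ++ [b]) := by
  constructor
  · intro h
    induction h using TransGen.head_induction_on with
    | single h => exact ⟨[], isChain_pair.2 h⟩
    | head hac _ ih =>
      obtain ⟨l, hl⟩ := ih
      exact ⟨_ :: l, hl.cons_cons hac⟩
  · rintro ⟨l, hl⟩
    induction l generalizing a with
    | nil => exact .single (isChain_pair.1 hl)
    | cons c l ih =>
      obtain ⟨hac, hl⟩ := isChain_cons_cons.1 hl
      exact .head hac (ih hl)

theorem TransGen.and_map_eq_of_map_le {β : Type*} [PartialOrder β] {f : α → β}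
    (hf : ∀ a b, R a b → f a ≤ f b) {a b : α} (h : TransGen R a b) (hba : f b ≤ f a) :
    TransGen (fun x y => R x y ∧ f x = f y) a b := by
  have map_le : ∀ {x y}, TransGen R x y → f x ≤ f y := fun hxy => by
    induction hxy with
    | single h => exact hf _ _ h
    | tail _ h ih => exact ih.trans (hf _ _ h)
  induction h with
  | single hab => exact .single ⟨hab, (hf _ _ hab).antisymm hba⟩
  | tail hac hcb ih =>
    have hcb' := hf _ _ hcb
    exact .tail (ih (hcb'.trans hba)) ⟨hcb, hcb'.antisymm (hba.trans (map_le hac))⟩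

theorem irreflexive_transGen_iff_exists_isStrictTotalOrder :
    (∀ a, ¬ TransGen R a a) ↔ ∃ r, IsStrictTotalOrder α r ∧ ∀ a b, R a b → r a b := by
  constructor
  · intro hirr
    have : IsStrictOrder α (TransGen R) := { irrefl := hirr, trans := fun _ _ _ => .trans }
    let := partialOrderOfSO (TransGen R)
    exact ⟨(· < · : LinearExtension α → LinearExtension α → Prop),
      inferInstanceAs (IsStrictTotalOrder (LinearExtension α) (· < ·)),
      fun a b hab => toLinearExtension.monotone.strictMono_of_injective (fun _ _ => id)
        (TransGen.single hab : a < b)⟩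
  · rintro ⟨r, hr, hRr⟩ a ha
    exact irrefl_of r a (transGen_minimal hRr a a ha)

end Relation

section TemporalGraph

variable {V ε : Type*} (tl hd : ε → V) (dep lam : ε → ℝ) (α : V → ℝ)

def IsZeroStep (e f : ε) : Prop :=
  tl f = hd e ∧ lam e = 0 ∧ α (tl f) = 0 ∧ dep e = dep f

variable {tl hd dep lam α}

theorem isZeroCycle_iff_isChain_isZeroStep {q : ε} {rest : List ε} :
    IsZeroCycle tl hd dep lam α q rest ↔
      IsChain (IsZeroStep tl hd dep lam α) (q :: rest ++ [q]) := by
  constructor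
  · rintro ⟨hall, hchain, hlast⟩
    have hclosed := hchain.append (isChain_singleton q)
      (by simpa [getLast?_eq_some_getLast] using hlast)
    refine hclosed.imp_of_mem_imp ?_
    have mem : ∀ x ∈ q :: rest ++ [q], x ∈ q :: rest := fun x hx => by grind
    intro e f he hf hef
    obtain ⟨hle, -, hde⟩ := hall e (mem e he)
    obtain ⟨-, hαf, hdf⟩ := hall f (mem f hf)
    exact ⟨hef.symm, hle, hαf, hde.trans hdf.symm⟩
  · intro h
    refine ⟨fun e he => ⟨?_, ?_, ?_⟩, h.left_of_append.imp fun e f hef => hef.1.symm,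
      (h.rel_getLast_head_of_append (by simp) (by simp)).1.symm⟩
    · obtain ⟨f, -, hef⟩ := h.exists_rel_of_mem_dropLast (by rwa [dropLast_concat])
      exact hef.2.1
    · obtain ⟨d, -, hde⟩ := h.exists_rel_of_mem_tail (by simpa [or_comm] using he)
      exact hde.2.2.1
    · exact h.induction (dep · = dep q) _ (fun x y hxy hx => hxy.2.2.2.symm.trans hx)
        (fun _ => rfl) e (mem_append_left _ he)

variable (hlam : ∀ e, 0 ≤ lam e) (hα : ∀ v, 0 ≤ α v)
include hlam hα

theorem HalfExtends.dep_le {e f : ε} (h : HalfExtends tl hd dep lam α e f) : dep e ≤ dep f := by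
  linarith [h.2, hlam e, hα (hd e)]

theorem halfExtends_and_dep_eq_iff_isZeroStep {e f : ε} :
    HalfExtends tl hd dep lam α e f ∧ dep e = dep f ↔ IsZeroStep tl hd dep lam α e f := by
  constructor
  · rintro ⟨⟨htl, hle⟩, hdep⟩
    have := hlam e
    have := hα (hd e)
    exact ⟨htl, by linarith, by rw [htl]; linarith, hdep⟩
  · rintro ⟨htl, hlam0, hα0, hdep⟩
    refine ⟨⟨htl, ?_⟩, hdep⟩
    rw [← htl, hlam0, hα0, hdep, add_zero, add_zero]

theorem exists_isZeroCycle_iff_exists_transGen_halfExtends :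
    (∃ q rest, IsZeroCycle tl hd dep lam α q rest) ↔
      ∃ e, TransGen (HalfExtends tl hd dep lam α) e e := by
  simp_rw [isZeroCycle_iff_isChain_isZeroStep, ← transGen_iff_exists_isChain]
  refine exists_congr fun e => ⟨TransGen.mono (fun x y hxy =>
    ((halfExtends_and_dep_eq_iff_isZeroStep hlam hα).2 hxy).1) e e, fun h => ?_⟩
  exact TransGen.mono (fun x y => (halfExtends_and_dep_eq_iff_isZeroStep hlam hα).1) e e
    (h.and_map_eq_of_map_le (fun x y => HalfExtends.dep_le hlam hα) le_rfl)

end TemporalGraph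

theorem zeroAcyclic_iff_halfExtendRespecting_order_general
    {V ε : Type*} (tl hd : ε → V) (dep lam : ε → ℝ) (α : V → ℝ)
    (hlam : ∀ e, 0 ≤ lam e) (hα : ∀ v, 0 ≤ α v) :
    (¬ ∃ q rest, IsZeroCycle tl hd dep lam α q rest) ↔
    ∃ r : ε → ε → Prop, IsStrictTotalOrder ε r ∧
      ∀ e f, HalfExtends tl hd dep lam α e f → r e f := by
  rw [exists_isZeroCycle_iff_exists_transGen_halfExtends hlam hα, not_exists]
  exact irreflexive_transGen_iff_exists_isStrictTotalOrder

/-- A temporal graph (with nonnegative travel times and minimum waiting times)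
is zero-acyclic if and only if there exists a half-extend-respecting linear ordering
of its temporal edges. -/
theorem zeroAcyclic_iff_halfExtendRespecting_order
    {V ε : Type*} [Fintype ε] (tl hd : ε → V) (dep lam : ε → ℝ) (α : V → ℝ)
    (hlam : ∀ e, 0 ≤ lam e) (hα : ∀ v, 0 ≤ α v) :
    (¬ ∃ q rest, IsZeroCycle tl hd dep lam α q rest) ↔
    ∃ r : ε → ε → Prop, IsStrictTotalOrder ε r ∧
      ∀ e f, HalfExtends tl hd dep lam α e f → r e f :=
  zeroAcyclic_iff_halfExtendRespecting_order_general tl hd dep lam α hlam hα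
end

section
/- In any half-extend-respecting ordering of the edges of a temporal graph, the edges of every temporal walk appear in order: if e and f are two edges of a walk with e occurring before f in the walk, then e precedes f in the ordering. -/
/-- Edge `f` extends edge `e` under waiting constraints `(α, β)`. -/
def Extends {V ε : Type*} (tl hd : ε → V) (dep lam : ε → ℝ) (α : V → ℝ)
    (β : V → EReal) (e f : ε) : Prop :=
  hd e = tl f ∧ dep e + lam e + α (tl f) ≤ dep f ∧
    (dep f : EReal) ≤ ((dep e + lam e : ℝ) : EReal) + β (tl f)

theorem Extends.halfExtends {V ε : Type*} {tl hd : ε → V} {dep lam : ε → ℝ} {α : V → ℝ}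
    {β : V → EReal} {e f : ε} (h : Extends tl hd dep lam α β e f) :
    HalfExtends tl hd dep lam α e f :=
  ⟨h.1.symm, h.1 ▸ h.2.1⟩

/-- In any half-extend-respecting ordering of the edges, the edges of every temporal
walk appear in order: if `e` occurs before `f` in the walk then `e` precedes `f`. -/
theorem walk_edges_in_order {V ε : Type*} (tl hd : ε → V) (dep lam : ε → ℝ)
    (α : V → ℝ) (β : V → EReal)
    (r : ε → ε → Prop) (hsto : IsStrictTotalOrder ε r)
    (hresp : ∀ e f, HalfExtends tl hd dep lam α e f → r e f)
    (Q : List ε) (hwalk : List.Chain' (Extends tl hd dep lam α β) Q) :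
    ∀ (i j : Fin Q.length), (i : ℕ) < (j : ℕ) → r (Q.get i) (Q.get j) := by
  have hchain : Q.IsChain r := hwalk.imp fun e f hef => hresp e f hef.halfExtends
  exact List.pairwise_iff_get.mp hchain.pairwise
end

section
/- Let G be a zero-acyclic temporal graph and (E^dep, E^arr) a doubly-sorted representation of G such that E^arr is half-extend-respecting. Then every walk Q in G is (E^dep, E^arr)-respected: for every pair e, f of consecutive edges in Q, and every edge e' with the same tail as f satisfying f ≤_{E^dep} e', we have e <_{E^arr} e'. -/
/-- Let `G` be a zero-acyclic temporal graph with a doubly-sorted representation: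
`ltdep` (order of `E^dep`) is node-departure sorted and `ltarr` (order of `E^arr`) is
node-arrival sorted and half-extend-respecting. Then every walk `Q` is
`(E^dep, E^arr)`-respected: for consecutive edges `e, f` of `Q` and any edge `e'` with
the same tail as `f` and `f ≤_{E^dep} e'`, we have `e <_{E^arr} e'`. -/
theorem walk_respected {V ε : Type*} (tl hd : ε → V) (dep lam : ε → ℝ)
    (α : V → ℝ) (β : V → EReal)
    (hza : ¬ ∃ q rest, IsZeroCycle tl hd dep lam α q rest)
    (ltdep ltarr : ε → ε → Prop)
    (hdepSTO : IsStrictTotalOrder ε ltdep) (harrSTO : IsStrictTotalOrder ε ltarr)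
    (hdepsort : ∀ e f, tl e = tl f → dep e < dep f → ltdep e f)
    (harrsort : ∀ e f, hd e = hd f → dep e + lam e < dep f + lam f → ltarr e f)
    (hher : ∀ e f, HalfExtends tl hd dep lam α e f → ltarr e f)
    (Q : List ε) (hwalk : List.Chain' (Extends tl hd dep lam α β) Q) :
    List.Chain'
      (fun e f => ∀ e', tl e' = tl f → (ltdep f e' ∨ f = e') → ltarr e e') Q := by
  refine hwalk.imp ?_
  rintro e f ⟨h1, h2, _⟩ e' htl hcase
  have hh : ∀ g, tl g = tl f → dep f ≤ dep g → ltarr e g := by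
    intro g hg hdg
    apply hher
    refine ⟨hg.trans h1.symm, ?_⟩
    rw [h1]
    linarith
  rcases hcase with hlt | rfl
  · by_cases hle : dep f ≤ dep e'
    · exact hh e' htl hle
    · exact absurd (hdepSTO.trans _ _ _ hlt (hdepsort e' f htl (lt_of_not_ge hle)))
        (hdepSTO.irrefl f)
  · exact hh f rfl le_rfl
end

section
/- Let D be a weighted directed graph whose arc weights are elements of a cost set C with total order ⪯ and combination ⊕ satisfying right-isotonicity, and suppose every arc weight c in D satisfies d ⪯ d ⊕ c for all d ∈ C (C-non-negativity). Then for every walk W from a node u in a source set S to a node v, there exists a path P from u to v with γ^D(B', P) ⪯ γ^D(B', W), where γ^D(B', W) is the cost of the walk starting from initial cost B'[u] and combining arc weights left-to-right via ⊕. -/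
/-- `ArcsFrom u v l`: the list of weighted arcs `l` forms a walk from `u` to `v`
(consecutive arcs chain head to tail; the empty walk requires `u = v`). -/
def ArcsFrom {V C : Type*} : V → V → List (V × V × C) → Prop
  | u, v, [] => u = v
  | u, v, a :: l => a.1 = u ∧ ArcsFrom a.2.1 v l

/-- Cost of a walk: combine arc weights left-to-right starting from `b`. -/
def walkCostD {V C : Type*} (comb : C → C → C) (b : C) (l : List (V × V × C)) : C :=
  l.foldl (fun c a => comb c a.2.2) b

/-!
Induct on the walk `W = a :: W'`, where `a` leaves `u`. The walk `W'` is first shortened to a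
path `P'`. If `u` does not occur on `P'`, then `a :: P'` is a path. Otherwise we keep only the
suffix of `P'` that starts at `u`: the discarded prefix together with `a` is a closed walk
through `u`, and by non-negativity and right-isotonicity dropping it cannot increase the cost.
-/

namespace ArcsFrom

variable {V C : Type*}

def nodes (u : V) (l : List (V × V × C)) : List V :=
  u :: l.map (fun a => a.2.1)

theorem exists_suffix_of_mem_nodes {u v x : V} :
    ∀ {l : List (V × V × C)}, ArcsFrom u v l → x ∈ nodes u l →
      ∃ l₁ l₂, l = l₁ ++ l₂ ∧ ArcsFrom x v l₂ ∧ nodes x l₂ <:+ nodes u l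
  | [], h, hx => by
      obtain rfl : x = u := by simpa [nodes] using hx
      exact ⟨[], [], rfl, h, List.suffix_refl _⟩
  | a :: l, ⟨ha, h⟩, hx => by
      rcases List.mem_cons.mp hx with rfl | hx
      · exact ⟨[], a :: l, rfl, ⟨ha, h⟩, List.suffix_refl _⟩
      · obtain ⟨l₁, l₂, rfl, h₂, hsuf⟩ := exists_suffix_of_mem_nodes h hx
        exact ⟨a :: l₁, l₂, rfl, h₂, hsuf.trans (List.suffix_cons _ _)⟩

end ArcsFrom

open ArcsFrom

section Cost

variable {V C : Type*} {comb : C → C → C} {le : C → C → Prop}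

theorem walkCostD_cons (b : C) (a : V × V × C) (l : List (V × V × C)) :
    walkCostD comb b (a :: l) = walkCostD comb (comb b a.2.2) l := rfl

theorem walkCostD_append (b : C) (l₁ l₂ : List (V × V × C)) :
    walkCostD comb b (l₁ ++ l₂) = walkCostD comb (walkCostD comb b l₁) l₂ :=
  List.foldl_append

theorem walkCostD_mono_left (hiso : ∀ c₁ c₂ c, le c₁ c₂ → le (comb c₁ c) (comb c₂ c)) :
    ∀ (l : List (V × V × C)) {b b' : C}, le b b' →
      le (walkCostD comb b l) (walkCostD comb b' l)
  | [], _, _, h => h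
  | _ :: l, _, _, h => walkCostD_mono_left hiso l (hiso _ _ _ h)

theorem le_walkCostD [IsPreorder C le] {A : Set (V × V × C)}
    (hnn : ∀ a ∈ A, ∀ d, le d (comb d a.2.2)) :
    ∀ (l : List (V × V × C)), (∀ a ∈ l, a ∈ A) → ∀ b, le b (walkCostD comb b l)
  | [], _, b => refl b
  | a :: l, hA, b =>
      have ⟨haA, hlA⟩ := List.forall_mem_cons.mp hA
      Trans.trans (hnn a haA b) (le_walkCostD hnn l hlA _)

variable [IsPreorder C le] (hiso : ∀ c₁ c₂ c, le c₁ c₂ → le (comb c₁ c) (comb c₂ c))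
  {A : Set (V × V × C)} (hnn : ∀ a ∈ A, ∀ d, le d (comb d a.2.2))
include hiso hnn

theorem exists_path_le_of_mem_nodes {x u v : V} {b b' : C} (hbb' : le b b')
    {P : List (V × V × C)} (hPA : ∀ a ∈ P, a ∈ A) (hP : ArcsFrom x v P)
    (hPnd : (nodes x P).Nodup) (hu : u ∈ nodes x P) :
    ∃ Q : List (V × V × C), (∀ a ∈ Q, a ∈ A) ∧ ArcsFrom u v Q ∧ (nodes u Q).Nodup ∧
      le (walkCostD comb b Q) (walkCostD comb b' P) := by
  obtain ⟨P₁, Q, rfl, hQ, hsuf⟩ := exists_suffix_of_mem_nodes hP hu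
  obtain ⟨hP₁A, hQA⟩ := List.forall_mem_append.mp hPA
  refine ⟨Q, hQA, hQ, hPnd.sublist hsuf.sublist, ?_⟩
  rw [walkCostD_append]
  exact walkCostD_mono_left hiso Q (Trans.trans hbb' (le_walkCostD hnn P₁ hP₁A b'))

theorem exists_path_le {v : V} :
    ∀ (W : List (V × V × C)) {u : V} (b : C), (∀ a ∈ W, a ∈ A) → ArcsFrom u v W →
      ∃ P : List (V × V × C), (∀ a ∈ P, a ∈ A) ∧ ArcsFrom u v P ∧ (nodes u P).Nodup ∧
        le (walkCostD comb b P) (walkCostD comb b W)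
  | [], _, b, _, hW => ⟨[], List.forall_mem_nil _, hW, List.nodup_singleton _, refl b⟩
  | a :: W, u, b, hWA, ⟨ha, hW⟩ => by
      obtain ⟨haA, hWA⟩ := List.forall_mem_cons.mp hWA
      obtain ⟨P, hPA, hP, hPnd, hPW⟩ := exists_path_le W (comb b a.2.2) hWA hW
      rw [walkCostD_cons]
      by_cases hu : u ∈ nodes a.2.1 P
      · obtain ⟨Q, hQA, hQ, hQnd, hQP⟩ :=
          exists_path_le_of_mem_nodes hiso hnn (hnn a haA b) hPA hP hPnd hu
        exact ⟨Q, hQA, hQ, hQnd, Trans.trans hQP hPW⟩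
      · exact ⟨a :: P, List.forall_mem_cons.mpr ⟨haA, hPA⟩, ⟨ha, hP⟩,
          List.nodup_cons.mpr ⟨hu, hPnd⟩, hPW⟩

end Cost

theorem walk_to_path_cost_general {V C : Type*} (comb : C → C → C) (le : C → C → Prop)
    (hord : IsLinearOrder C le)
    (hiso : ∀ c₁ c₂ c, le c₁ c₂ → le (comb c₁ c) (comb c₂ c))
    (A : Set (V × V × C))
    (hnn : ∀ a ∈ A, ∀ d, le d (comb d a.2.2))
    (B' : V → C) (u v : V)
    (W : List (V × V × C)) (hWA : ∀ a ∈ W, a ∈ A) (hW : ArcsFrom u v W) :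
    ∃ P : List (V × V × C), (∀ a ∈ P, a ∈ A) ∧ ArcsFrom u v P ∧
      (u :: P.map (fun a => a.2.1)).Nodup ∧
      le (walkCostD comb (B' u) P) (walkCostD comb (B' u) W) :=
  have := hord
  exists_path_le hiso hnn W (B' u) hWA hW

/-- In a weighted digraph over a cost set `(C, ⊕, ⪯)` with `⪯` a total order
satisfying right-isotonicity, if every arc weight is `C`-non-negative, then every walk
`W` from a source node `u ∈ S` to `v` can be replaced by a path `P` (no repeated node)
from `u` to `v` with `γ^D(B', P) ⪯ γ^D(B', W)`. -/
theorem walk_to_path_cost {V C : Type*} (comb : C → C → C) (le : C → C → Prop)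
    (hord : IsLinearOrder C le)
    (hiso : ∀ c₁ c₂ c, le c₁ c₂ → le (comb c₁ c) (comb c₂ c))
    (A : Set (V × V × C))
    (hnn : ∀ a ∈ A, ∀ d, le d (comb d a.2.2))
    (S : Set V) (B' : V → C) (u v : V) (hu : u ∈ S)
    (W : List (V × V × C)) (hWA : ∀ a ∈ W, a ∈ A) (hW : ArcsFrom u v W) :
    ∃ P : List (V × V × C), (∀ a ∈ P, a ∈ A) ∧ ArcsFrom u v P ∧
      (u :: P.map (fun a => a.2.1)).Nodup ∧
      le (walkCostD comb (B' u) P) (walkCostD comb (B' u) W) :=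
  walk_to_path_cost_general comb le hord hiso A hnn B' u v W hWA hW
end
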